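/- Let A = {π, φ} (as a set) and augment by η with η < π and η < φ (π and φ incomparable). Then the induced order ≤_η on {π, φ}* is the sublist (subsequence) order: v ≤_η w iff v is a subsequence of w. -/

import Mathlib

/-- Erase all occurrences of the letter `a` from a word. -/
def aErase {α : Type*} [DecidableEq α] (a : α) (w : List α) : List α :=
  w.filter (· ≠ a)

/-- `w'` is an `a`-extension of `w`: it is obtained by inserting copies of `a` into `w`,
equivalently erasing all occurrences of `a` from `w'` yields `w`. -/
def IsAExt {α : Type*} [DecidableEq α] (a : α) (w w' : List α) : Prop :=
  aErase a w' = w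

/-- The induced relation `≤ₐ` on words, relative to a relation `r` on letters:
`v ≤ₐ w` iff there are `a`-extensions of `v` and `w` of equal length that are
related componentwise (componentwise relation of equal-length lists is `List.Forall₂ r`). -/
def LeExt {α : Type*} [DecidableEq α] (r : α → α → Prop) (a : α) (v w : List α) : Prop :=
  ∃ v' w', IsAExt a v v' ∧ IsAExt a w w' ∧ List.Forall₂ r v' w'

/-! Erasing the padding letter from two componentwise related words leaves a subword, and
conversely a subword is padded to the length of the word by putting `a` at every position it
skips; the letter `a` must not occur in the larger word, since no `a`-extension erases to it. -/

section

variable {α : Type*} [DecidableEq α] {a x : α}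

@[simp]
theorem aErase_cons_self (w : List α) : aErase a (a :: w) = aErase a w := by
  simp [aErase]

theorem aErase_cons_of_ne (hx : x ≠ a) (w : List α) : aErase a (x :: w) = x :: aErase a w := by
  simp [aErase, hx]

theorem aErase_sublist_aErase_cons (x : α) (w : List α) :
    (aErase a w).Sublist (aErase a (x :: w)) :=
  (List.sublist_cons_self x w).filter _

theorem aErase_sublist_of_forall₂ {l₁ l₂ : List α}
    (h : List.Forall₂ (fun x y => x = a ∨ x = y) l₁ l₂) :
    (aErase a l₁).Sublist (aErase a l₂) := by
  induction h with
  | nil => exact .slnil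
  | @cons x y _ l₂ hxy _ ih =>
    rcases hxy with rfl | rfl
    · simpa using ih.trans (aErase_sublist_aErase_cons y l₂)
    · by_cases hx : x = a
      · subst hx
        simpa using ih
      · simpa [aErase_cons_of_ne hx] using ih

theorem leExt_of_sublist {v w : List α} (h : v.Sublist w) (hw : a ∉ w) :
    LeExt (fun x y => x = a ∨ x = y) a v w := by
  induction h with
  | slnil => exact ⟨[], [], rfl, rfl, .nil⟩
  | @cons v w y _ ih =>
    obtain ⟨v', w', hv', hw', hf⟩ := ih (fun h => hw (List.mem_cons_of_mem y h))
    have hy : y ≠ a := fun h => hw (h ▸ List.mem_cons_self)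
    refine ⟨a :: v', y :: w', ?_, ?_, .cons (.inl rfl) hf⟩
    · simpa [IsAExt] using hv'
    · simpa [IsAExt, aErase_cons_of_ne hy] using hw'
  | @cons_cons v w x _ ih =>
    obtain ⟨v', w', hv', hw', hf⟩ := ih (fun h => hw (List.mem_cons_of_mem x h))
    have hx : x ≠ a := fun h => hw (h ▸ List.mem_cons_self)
    refine ⟨x :: v', x :: w', ?_, ?_, .cons (.inr rfl) hf⟩
    · simpa [IsAExt, aErase_cons_of_ne hx] using hv'
    · simpa [IsAExt, aErase_cons_of_ne hx] using hw'

theorem leExt_eq_or_eq_iff_sublist {v w : List α} (hw : a ∉ w) :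
    LeExt (fun x y => x = a ∨ x = y) a v w ↔ v.Sublist w := by
  refine ⟨?_, fun h => leExt_of_sublist h hw⟩
  rintro ⟨v', w', rfl, rfl, hf⟩
  exact aErase_sublist_of_forall₂ hf

end

/-- The letters `π, η, φ` are encoded as `0, 1, 2 : Fin 3`. -/
theorem stmt_15_general (v w : List (Fin 3)) (hw : (1 : Fin 3) ∉ w) :
    LeExt (fun x y : Fin 3 => x = 1 ∨ x = y) (1 : Fin 3) v w ↔ v.Sublist w :=
  leExt_eq_or_eq_iff_sublist hw

/-- Example 3: alphabet `{π, φ}` (as `0, 2 : Fin 3`) with auxiliary letter `η = 1`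
related by `η < π`, `η < φ` only (and `π, φ` incomparable). The induced order is the
sublist (morphological) order. -/
theorem stmt_15 (v w : List (Fin 3)) (hv : (1 : Fin 3) ∉ v) (hw : (1 : Fin 3) ∉ w) :
    LeExt (fun x y : Fin 3 => x = 1 ∨ x = y) (1 : Fin 3) v w ↔ v.Sublist w :=
  stmt_15_general v w hw
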